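/- Let 0<p<1, q=1-p. For i.i.d. Bernoulli(p) variables X_1,...,X_{2m-1} with m ≥ 3 and T=2, let A_n be the event that exactly two of X_n,...,X_{n+m-1} equal 0. The probability of the part of A_1 ∩ complement(A_2) ∩ ... ∩ complement(A_m) on which X_1=0 equals (m-1) q^2 p^{2m-3} + ((m-1)(m-2)/2) q^3 p^{2m-4}. -/

import Mathlib

/-!
The event depends only on the set `Z ⊆ [1, 2m-1]` of tails among the first `2m-1` tosses, and by
independence each such pattern has probability `q^|Z| p^(2m-1-|Z|)`. Sliding a window one step
changes its count of tails by at most one, and the first step drops the tail at position `1`;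
so "no window starting in `[2, m]` has exactly two tails" means that each of them has at most one.
Writing `Z ∩ [1, m] = {1, k}`, the window at `k` rules out tails in `(m, m+k)` and the window at `m`
allows at most one tail in `[m+k, 2m-1]`. Hence `Z = {1, k}` (`m-1` patterns) or
`Z = {1, k, j}` with `m+k ≤ j ≤ 2m-1` (`(m-1)(m-2)/2` patterns).
-/
open MeasureTheory ProbabilityTheory Finset Filter

/-- Number of zeros (tails) among `X n, X (n+1), ..., X (n+m-1)`. -/
def zerosCount {Ω : Type*} (X : ℕ → Ω → Bool) (n m : ℕ) (ω : Ω) : ℕ :=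
  ((Finset.range m).filter (fun j => X (n + j) ω = false)).card

/-- The event that the window of length `m` starting at `n` contains exactly `T` zeros. -/
def contamRun {Ω : Type*} (X : ℕ → Ω → Bool) (T n m : ℕ) : Set Ω :=
  {ω | zerosCount X n m ω = T}

def zeroSet {Ω : Type*} (X : ℕ → Ω → Bool) (I : Finset ℕ) (ω : Ω) : Finset ℕ :=
  {i ∈ I | X i ω = false}

section ZeroSet

variable {Ω : Type*} (X : ℕ → Ω → Bool)

lemma zeroSet_subset (I : Finset ℕ) (ω : Ω) : zeroSet X I ω ⊆ I :=
  filter_subset _ _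

lemma zeroSet_preimage_singleton {I S : Finset ℕ} (hS : S ⊆ I) :
    zeroSet X I ⁻¹' {S} = ⋂ i ∈ I, X i ⁻¹' {decide (i ∉ S)} := by
  ext ω
  simp only [Set.mem_preimage, Set.mem_singleton_iff, Set.mem_iInter, zeroSet]
  constructor
  · rintro rfl i hi
    cases h : X i ω <;> simp [hi, h]
  · intro h
    ext i
    by_cases hi : i ∈ I
    · have := h i hi
      cases hX : X i ω <;> simp_all
    · simp only [mem_filter, hi, false_and, false_iff]
      exact fun h => hi (hS h)

lemma zerosCount_eq_card_zeroSet_inter {I : Finset ℕ} {n m : ℕ} (hI : Ico n (n + m) ⊆ I)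
    (ω : Ω) : zerosCount X n m ω = #(zeroSet X I ω ∩ Ico n (n + m)) := by
  refine card_nbij' (n + ·) (· - n) ?_ ?_ ?_ ?_
  · intro j hj
    simp only [coe_filter, mem_range, coe_inter, coe_Ico, zeroSet, Set.mem_ofPred_eq,
      Set.mem_inter_iff, Set.mem_Ico] at hj ⊢
    exact ⟨⟨hI (mem_Ico.2 ⟨by omega, by omega⟩), hj.2⟩, by omega, by omega⟩
  · intro i hi
    simp only [coe_filter, mem_range, coe_inter, coe_Ico, zeroSet, Set.mem_ofPred_eq,
      Set.mem_inter_iff, Set.mem_Ico] at hi ⊢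
    exact ⟨by omega, by rw [Nat.add_sub_cancel' hi.2.1]; exact hi.1.2⟩
  · intro j _
    simp
  · intro i hi
    simp only [coe_inter, Set.mem_inter_iff, coe_Ico, Set.mem_Ico] at hi
    simp only
    omega

end ZeroSet

section Probability

variable {Ω : Type*} [MeasurableSpace Ω] {μ : Measure Ω} [IsProbabilityMeasure μ]
  {X : ℕ → Ω → Bool} {p : ℝ}

lemma measureReal_zeroSet_preimage_singleton (hmeas : ∀ i, Measurable (X i))
    (hindep : iIndepFun X μ) (hp : 0 ≤ p) (hX : ∀ i, μ {ω | X i ω = true} = ENNReal.ofReal p)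
    {I S : Finset ℕ} (hS : S ⊆ I) :
    μ.real (zeroSet X I ⁻¹' {S}) = (1 - p) ^ #S * p ^ (#I - #S) := by
  have htrue : ∀ i, μ.real (X i ⁻¹' {true}) = p := fun i => by
    rw [measureReal_def, ← ENNReal.toReal_ofReal hp, ← hX i]; rfl
  have hfalse : ∀ i, μ.real (X i ⁻¹' {false}) = 1 - p := fun i => by
    rw [← htrue i, ← probReal_compl_eq_one_sub (hmeas i (measurableSet_singleton true))]
    congr 1; ext ω; simp
  rw [zeroSet_preimage_singleton X hS, measureReal_def,
    hindep.meas_biInter fun i _ => ⟨_, measurableSet_singleton _, rfl⟩, ENNReal.toReal_prod]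
  simp_rw [← measureReal_def]
  rw [← prod_filter_mul_prod_filter_not I (· ∈ S), filter_mem_eq_inter, inter_eq_right.2 hS,
    prod_eq_pow_card (b := 1 - p) fun i hi => by simp [hi, hfalse],
    prod_eq_pow_card (b := p) fun i hi => by simp [(mem_filter.1 hi).2, htrue],
    filter_not, filter_mem_eq_inter, inter_eq_right.2 hS, card_sdiff_of_subset hS]

lemma measureReal_zeroSet_preimage (hmeas : ∀ i, Measurable (X i))
    (hindep : iIndepFun X μ) (hp : 0 ≤ p) (hX : ∀ i, μ {ω | X i ω = true} = ENNReal.ofReal p)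
    {I : Finset ℕ} {F : Finset (Finset ℕ)} (hF : ∀ S ∈ F, S ⊆ I) :
    μ.real (zeroSet X I ⁻¹' F) = ∑ S ∈ F, (1 - p) ^ #S * p ^ (#I - #S) := by
  rw [← sum_measureReal_preimage_singleton F fun S hS => by
    rw [zeroSet_preimage_singleton X (hF S hS)]
    exact measurableSet_biInter _ fun i _ => hmeas i (measurableSet_singleton _)]
  exact sum_congr rfl fun S hS =>
    measureReal_zeroSet_preimage_singleton hmeas hindep hp hX (hF S hS)

end Probability

section Windows

lemma card_inter_Ico_succ_le (Z : Finset ℕ) (n m : ℕ) :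
    #(Z ∩ Ico (n + 1) (n + 1 + m)) ≤ #((Z ∩ Ico n (n + m)).erase n) + 1 :=
  calc #(Z ∩ Ico (n + 1) (n + 1 + m))
      ≤ #(insert (n + m) ((Z ∩ Ico n (n + m)).erase n)) := card_le_card fun i hi => by
        simp only [mem_inter, mem_Ico, mem_insert, mem_erase] at hi ⊢
        rcases eq_or_ne i (n + m) with h | h
        exacts [.inl h, .inr ⟨by omega, hi.1, by omega, by omega⟩]
    _ ≤ _ := card_insert_le _ _

lemma card_inter_Ico_le_one_of_ne_two {Z : Finset ℕ} {m : ℕ} (h1 : 1 ∈ Z)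
    (hw1 : #(Z ∩ Ico 1 (1 + m)) = 2) (hne : ∀ n ∈ Icc 2 m, #(Z ∩ Ico n (n + m)) ≠ 2) :
    ∀ n ∈ Icc 2 m, #(Z ∩ Ico n (n + m)) ≤ 1 := by
  intro n hn
  obtain ⟨h2n, hnm⟩ := mem_Icc.1 hn
  induction n, h2n using Nat.le_induction with
  | base =>
    have := card_inter_Ico_succ_le Z 1 m
    simp only [Nat.reduceAdd] at this
    rw [card_erase_of_mem (mem_inter.2 ⟨h1, mem_Ico.2 ⟨le_rfl, by omega⟩⟩), hw1] at this
    have := hne 2 hn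
    omega
  | succ n h2n ih =>
    have := card_inter_Ico_succ_le Z n m
    have := card_erase_le (s := Z ∩ Ico n (n + m)) (a := n)
    have := ih (mem_Icc.2 ⟨h2n, by omega⟩) (by omega)
    have := hne (n + 1) hn
    omega

lemma card_inter_Ico_le_one {Z : Finset ℕ} {n m : ℕ}
    (hsep : ∀ a ∈ Z, ∀ b ∈ Z, n ≤ a → a < b → a + m ≤ b) : #(Z ∩ Ico n (n + m)) ≤ 1 := by
  refine card_le_one.2 fun a ha b hb => ?_
  simp only [mem_inter, mem_Ico] at ha hb
  rcases lt_trichotomy a b with hab | hab | hab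
  · have := hsep a ha.1 b hb.1 ha.2.1 hab
    omega
  · exact hab
  · have := hsep b hb.1 a ha.1 hb.2.1 hab
    omega

end Windows

section GoodZeroSets

def pairZeroSets (m : ℕ) : Finset (Finset ℕ) :=
  (Icc 2 m).image fun k => {1, k}

def tripleZeroSets (m : ℕ) : Finset (Finset ℕ) :=
  (Icc 2 m).biUnion fun k => (Icc (m + k) (2 * m - 1)).image fun j => {1, k, j}

def goodZeroSets (m : ℕ) : Finset (Finset ℕ) :=
  pairZeroSets m ∪ tripleZeroSets m

variable {m : ℕ} {Z : Finset ℕ}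

lemma mem_goodZeroSets :
    Z ∈ goodZeroSets m ↔
      ∃ k ∈ Icc 2 m, Z = {1, k} ∨ ∃ j ∈ Icc (m + k) (2 * m - 1), Z = {1, k, j} := by
  simp only [goodZeroSets, pairZeroSets, tripleZeroSets, mem_union, mem_image, mem_biUnion]
  constructor
  · rintro (⟨k, hk, rfl⟩ | ⟨k, hk, j, hj, rfl⟩)
    exacts [⟨k, hk, .inl rfl⟩, ⟨k, hk, .inr ⟨j, hj, rfl⟩⟩]
  · rintro ⟨k, hk, rfl | ⟨j, hj, rfl⟩⟩
    exacts [.inl ⟨k, hk, rfl⟩, .inr ⟨k, hk, j, hj, rfl⟩]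

lemma subset_Icc_of_mem_goodZeroSets (hZ : Z ∈ goodZeroSets m) : Z ⊆ Icc 1 (2 * m - 1) := by
  obtain ⟨k, hk, rfl | ⟨j, hj, rfl⟩⟩ := mem_goodZeroSets.1 hZ <;> intro i hi <;>
    simp only [mem_Icc, mem_insert, mem_singleton] at * <;> omega

lemma windows_of_mem_goodZeroSets (hZ : Z ∈ goodZeroSets m) :
    1 ∈ Z ∧ #(Z ∩ Ico 1 (1 + m)) = 2 ∧ ∀ n ∈ Icc 2 m, #(Z ∩ Ico n (n + m)) ≤ 1 := by
  obtain ⟨k, hk, rfl | ⟨j, hj, rfl⟩⟩ := mem_goodZeroSets.1 hZ <;>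
    refine ⟨by simp, ?_, fun n hn => card_inter_Ico_le_one fun a ha b hb hna hab => ?_⟩ <;>
    simp only [mem_Icc, mem_insert, mem_singleton] at *
  · rw [show ({1, k} : Finset ℕ) ∩ Ico 1 (1 + m) = {1, k} by
      ext i; simp only [mem_inter, mem_insert, mem_singleton, mem_Ico]; omega]
    exact card_pair (by omega)
  · omega
  · rw [show ({1, k, j} : Finset ℕ) ∩ Ico 1 (1 + m) = {1, k} by
      ext i; simp only [mem_inter, mem_insert, mem_singleton, mem_Ico]; omega]
    exact card_pair (by omega)
  · omega

lemma mem_goodZeroSets_of_windows (hZ : Z ⊆ Icc 1 (2 * m - 1)) (h1 : 1 ∈ Z)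
    (hw1 : #(Z ∩ Ico 1 (1 + m)) = 2) (hle : ∀ n ∈ Icc 2 m, #(Z ∩ Ico n (n + m)) ≤ 1) :
    Z ∈ goodZeroSets m := by
  have hZ' : ∀ i ∈ Z, 1 ≤ i ∧ i ≤ 2 * m - 1 := fun i hi => mem_Icc.1 (hZ hi)
  have hm : 1 ≤ m := by
    rcases Nat.eq_zero_or_pos m with rfl | h
    · simp at hw1
    · exact h
  obtain ⟨k, hk⟩ := card_eq_one.1 (show #((Z ∩ Ico 1 (1 + m)).erase 1) = 1 by
    rw [card_erase_of_mem (mem_inter.2 ⟨h1, mem_Ico.2 ⟨le_rfl, by omega⟩⟩), hw1])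
  have hkZ : k ∈ Z ∧ 2 ≤ k ∧ k ≤ m := by
    have := hk ▸ mem_singleton_self k
    simp only [mem_erase, mem_inter, mem_Ico] at this
    exact ⟨this.2.1, by omega, by omega⟩
  have hlow : ∀ i ∈ Z, i ≤ m → i = 1 ∨ i = k := fun i hi him => by
    rcases eq_or_ne i 1 with h | h
    · exact .inl h
    · refine .inr (mem_singleton.1 (hk ▸ ?_))
      simp only [mem_erase, mem_inter, mem_Ico]
      exact ⟨h, hi, (hZ' i hi).1, by omega⟩
  have hgap : ∀ i ∈ Z, m < i → m + k ≤ i := fun i hi hmi => by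
    by_contra
    have := card_le_one.1 (hle k (mem_Icc.2 ⟨hkZ.2.1, hkZ.2.2⟩)) i
      (mem_inter.2 ⟨hi, mem_Ico.2 ⟨by omega, by omega⟩⟩) k
      (mem_inter.2 ⟨hkZ.1, mem_Ico.2 ⟨le_rfl, by omega⟩⟩)
    omega
  have htail : ∀ i ∈ Z, ∀ j ∈ Z, m < i → m < j → i = j := fun i hi j hj hmi hmj =>
    card_le_one.1 (hle m (mem_Icc.2 ⟨by omega, le_rfl⟩)) i
      (mem_inter.2 ⟨hi, mem_Ico.2 ⟨hmi.le, by have := hZ' i hi; omega⟩⟩) j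
      (mem_inter.2 ⟨hj, mem_Ico.2 ⟨hmj.le, by have := hZ' j hj; omega⟩⟩)
  refine mem_goodZeroSets.2 ⟨k, mem_Icc.2 hkZ.2, ?_⟩
  by_cases htop : ∃ j ∈ Z, m < j
  · obtain ⟨j, hjZ, hmj⟩ := htop
    refine .inr ⟨j, mem_Icc.2 ⟨hgap j hjZ hmj, (hZ' j hjZ).2⟩, ?_⟩
    ext i
    simp only [mem_insert, mem_singleton]
    constructor
    · intro hi
      rcases le_or_gt i m with him | him
      · exact (hlow i hi him).imp_right .inl
      · exact .inr (.inr (htail i hi j hjZ him hmj))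
    · rintro (rfl | rfl | rfl)
      exacts [h1, hkZ.1, hjZ]
  · push Not at htop
    refine .inl (ext fun i => ?_)
    simp only [mem_insert, mem_singleton]
    constructor
    · exact fun hi => hlow i hi (htop i hi)
    · rintro (rfl | rfl)
      exacts [h1, hkZ.1]

lemma card_of_mem_pairZeroSets {S : Finset ℕ} (hS : S ∈ pairZeroSets m) : #S = 2 := by
  obtain ⟨k, hk, rfl⟩ := mem_image.1 hS
  exact card_pair (by rw [mem_Icc] at hk; omega)

lemma card_of_mem_tripleZeroSets {S : Finset ℕ} (hS : S ∈ tripleZeroSets m) : #S = 3 := by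
  obtain ⟨k, hk, hS⟩ := mem_biUnion.1 hS
  obtain ⟨j, hj, rfl⟩ := mem_image.1 hS
  simp only [mem_Icc] at hk hj
  rw [card_insert_of_notMem (by simp only [mem_insert, mem_singleton]; omega),
    card_pair (by omega)]

lemma card_pairZeroSets (m : ℕ) : #(pairZeroSets m) = m - 1 := by
  rw [pairZeroSets, card_image_of_injOn fun k hk k' hk' h => ?_, Nat.card_Icc]
  · omega
  · have : k ∈ ({1, k'} : Finset ℕ) := h ▸ mem_insert_of_mem (mem_singleton_self k)
    simp only [coe_Icc, Set.mem_Icc, mem_insert, mem_singleton] at hk this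
    omega

lemma sum_Icc_two_sub_mul_two (m : ℕ) : (∑ k ∈ Icc 2 m, (m - k)) * 2 = (m - 1) * (m - 2) := by
  rw [sum_nbij' (fun k => m - k) (fun i => m - i) (f := fun k => m - k) (g := id)
    (t := range (m - 1))
    (by intro k hk; simp only [mem_Icc, mem_range] at hk ⊢; omega)
    (by intro i hi; simp only [mem_Icc, mem_range] at hi ⊢; omega)
    (by intro k hk; simp only [mem_Icc] at hk; omega)
    (by intro i hi; simp only [mem_range] at hi; omega)
    (fun _ _ => rfl)]
  exact (sum_range_id_mul_two (m - 1)).trans (by rw [Nat.sub_sub])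

lemma card_tripleZeroSets (m : ℕ) : #(tripleZeroSets m) * 2 = (m - 1) * (m - 2) := by
  have hinj : ∀ k ∈ Icc 2 m,
      Set.InjOn (fun j => ({1, k, j} : Finset ℕ)) (Icc (m + k) (2 * m - 1)) :=
    fun k hk j hj j' hj' h => by
      have : j ∈ ({1, k, j'} : Finset ℕ) := by
        rw [← show ({1, k, j} : Finset ℕ) = {1, k, j'} from h]
        simp
      simp only [mem_Icc, coe_Icc, Set.mem_Icc, mem_insert, mem_singleton] at hk hj hj' this
      omega
  have hdisj : (Icc 2 m : Set ℕ).PairwiseDisjoint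
      fun k => (Icc (m + k) (2 * m - 1)).image fun j => ({1, k, j} : Finset ℕ) := by
    intro k hk k' hk' hne
    refine disjoint_left.2 fun S hS hS' => hne ?_
    obtain ⟨j, hj, rfl⟩ := mem_image.1 hS
    obtain ⟨j', hj', h⟩ := mem_image.1 hS'
    have : k ∈ ({1, k', j'} : Finset ℕ) := h ▸ by simp
    simp only [mem_Icc, coe_Icc, Set.mem_Icc, mem_insert, mem_singleton] at hk hk' hj hj' this
    omega
  rw [tripleZeroSets, card_biUnion hdisj, ← sum_Icc_two_sub_mul_two]
  congr 1
  refine sum_congr rfl fun k hk => ?_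
  rw [card_image_of_injOn (hinj k hk), Nat.card_Icc]
  simp only [mem_Icc] at hk
  omega

lemma disjoint_pairZeroSets_tripleZeroSets (m : ℕ) :
    Disjoint (pairZeroSets m) (tripleZeroSets m) :=
  disjoint_left.2 fun S hS hS' => by
    have := (card_of_mem_pairZeroSets hS).symm.trans (card_of_mem_tripleZeroSets hS')
    omega

lemma sum_goodZeroSets (hm : 2 ≤ m) (f : ℕ → ℝ) :
    ∑ S ∈ goodZeroSets m, f #S = ((m : ℝ) - 1) * f 2 + ((m : ℝ) - 1) * ((m : ℝ) - 2) / 2 * f 3 := by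
  have hcount : (#(tripleZeroSets m) : ℝ) = ((m : ℝ) - 1) * ((m : ℝ) - 2) / 2 := by
    have := congrArg (Nat.cast : ℕ → ℝ) (card_tripleZeroSets m)
    push_cast [Nat.cast_sub (by omega : 1 ≤ m), Nat.cast_sub hm] at this
    linarith
  rw [goodZeroSets, sum_union (disjoint_pairZeroSets_tripleZeroSets m),
    sum_eq_card_nsmul fun S hS => congrArg f (card_of_mem_pairZeroSets hS),
    sum_eq_card_nsmul fun S hS => congrArg f (card_of_mem_tripleZeroSets hS),
    nsmul_eq_mul, nsmul_eq_mul, card_pairZeroSets, hcount, Nat.cast_sub (by omega), Nat.cast_one]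

lemma mem_goodZeroSets_iff (hZ : Z ⊆ Icc 1 (2 * m - 1)) :
    Z ∈ goodZeroSets m ↔
      1 ∈ Z ∧ #(Z ∩ Ico 1 (1 + m)) = 2 ∧ ∀ n ∈ Icc 2 m, #(Z ∩ Ico n (n + m)) ≠ 2 := by
  constructor
  · intro h
    obtain ⟨h1, hw1, hle⟩ := windows_of_mem_goodZeroSets h
    exact ⟨h1, hw1, fun n hn => by have := hle n hn; omega⟩
  · rintro ⟨h1, hw1, hne⟩
    exact mem_goodZeroSets_of_windows hZ h1 hw1 (card_inter_Ico_le_one_of_ne_two h1 hw1 hne)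

end GoodZeroSets

lemma contamRun_event_eq_zeroSet_preimage {Ω : Type*} (X : ℕ → Ω → Bool) {m : ℕ} (hm : 1 ≤ m) :
    contamRun X 2 1 m ∩ (⋂ n ∈ Icc 2 m, (contamRun X 2 n m)ᶜ) ∩ {ω | X 1 ω = false} =
      zeroSet X (Icc 1 (2 * m - 1)) ⁻¹' goodZeroSets m := by
  ext ω
  have hwin : ∀ n ∈ Icc 1 m,
      zerosCount X n m ω = #(zeroSet X (Icc 1 (2 * m - 1)) ω ∩ Ico n (n + m)) := fun n hn =>
    zerosCount_eq_card_zeroSet_inter X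
      (fun i hi => by simp only [mem_Icc, mem_Ico] at hn hi ⊢; omega) ω
  have hne : (∀ n ∈ Icc 2 m, ¬zerosCount X n m ω = 2) ↔
      ∀ n ∈ Icc 2 m, #(zeroSet X (Icc 1 (2 * m - 1)) ω ∩ Ico n (n + m)) ≠ 2 :=
    forall₂_congr fun n hn => by
      rw [hwin n (by simp only [mem_Icc] at hn ⊢; omega)]
  have h1 : X 1 ω = false ↔ 1 ∈ zeroSet X (Icc 1 (2 * m - 1)) ω := by
    simp only [zeroSet, mem_filter, mem_Icc]
    exact ⟨fun h => ⟨⟨le_rfl, by omega⟩, h⟩, And.right⟩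
  simp only [Set.mem_inter_iff, Set.mem_iInter, Set.mem_compl_iff, contamRun, Set.mem_ofPred_eq,
    Set.mem_preimage, mem_coe]
  rw [hwin 1 (by simp [hm]), hne, h1, mem_goodZeroSets_iff (zeroSet_subset X _ ω)]
  tauto

theorem stmt7_general {Ω : Type*} [MeasurableSpace Ω] (μ : Measure Ω) [IsProbabilityMeasure μ]
    (X : ℕ → Ω → Bool) (hmeas : ∀ i, Measurable (X i))
    (hindep : iIndepFun X μ)
    (p q : ℝ) (hp : 0 < p) (hq : q = 1 - p)
    (hX : ∀ i, μ {ω | X i ω = true} = ENNReal.ofReal p)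
    (m : ℕ) (hm : 3 ≤ m) :
    (μ (contamRun X 2 1 m ∩ (⋂ n ∈ Finset.Icc 2 m, (contamRun X 2 n m)ᶜ) ∩
        {ω | X 1 ω = false})).toReal =
      ((m : ℝ) - 1) * q ^ 2 * p ^ (2 * m - 3) +
        ((m : ℝ) - 1) * ((m : ℝ) - 2) / 2 * q ^ 3 * p ^ (2 * m - 4) := by
  subst hq
  rw [← measureReal_def, contamRun_event_eq_zeroSet_preimage X (by omega),
    measureReal_zeroSet_preimage hmeas hindep hp.le hX fun S => subset_Icc_of_mem_goodZeroSets]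
  refine (sum_goodZeroSets (by omega) fun c =>
    (1 - p) ^ c * p ^ (#(Icc 1 (2 * m - 1)) - c)).trans ?_
  rw [Nat.card_Icc, show 2 * m - 1 + 1 - 1 - 2 = 2 * m - 3 by omega,
    show 2 * m - 1 + 1 - 1 - 3 = 2 * m - 4 by omega]
  ring

theorem stmt7 {Ω : Type*} [MeasurableSpace Ω] (μ : Measure Ω) [IsProbabilityMeasure μ]
    (X : ℕ → Ω → Bool) (hmeas : ∀ i, Measurable (X i))
    (hindep : iIndepFun X μ)
    (p q : ℝ) (hp : 0 < p) (hp1 : p < 1) (hq : q = 1 - p)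
    (hX : ∀ i, μ {ω | X i ω = true} = ENNReal.ofReal p)
    (m : ℕ) (hm : 3 ≤ m) :
    (μ (contamRun X 2 1 m ∩ (⋂ n ∈ Finset.Icc 2 m, (contamRun X 2 n m)ᶜ) ∩
        {ω | X 1 ω = false})).toReal =
      ((m : ℝ) - 1) * q ^ 2 * p ^ (2 * m - 3) +
        ((m : ℝ) - 1) * ((m : ℝ) - 2) / 2 * q ^ 3 * p ^ (2 * m - 4) :=
  stmt7_general μ X hmeas hindep p q hp hq hX m hm
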